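/- arXiv:1602.04059 — 3 statements merged into one kernel-verified Lean document; each statement's English description precedes it below -/
import Mathlib

section
/- Let G be a graph that is not a matching, let H be a nonempty graph, and fix a subgraph G_− ⊆ G with e(G_−) = e(G) − 1 and v(G_−) = v(G). Let a graph G_−^H ∈ F(G_−,H) with central copy G′_− be given, and let g be a vertex pair that completes G′_− to a copy of G when inserted as an edge. Then every subgraph J ⊆ G_−^H that contains both vertices of g satisfies v(J) − e(J)/m_2(G,H) ≥ 2 − L(G_−^H). -/
/-!
Split `J` along the copies of `H`. The edges of `J` in the copy attached to an edge `e` of `G₋`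
form a subgraph of `H` on the `vₑ` vertices of `J` in that copy, so by definition of `m₂(G,H)`
there are at most `m₂(G,H) (vₑ - 2 + 1/m₂(G))` of them. The `s` edges of `G₋` whose copies meet
`J`, together with `xy`, span a subgraph of `G` with `s + 1` edges on `p` vertices, so by definition
of `m₂(G)` we get `s/m₂(G) ≤ p - 2`. Summing, `e(J)/m₂(G,H) ≤ ∑ₑ (vₑ - 2) + p - 2`. Finally,
counting the vertices of `G₋^H` copy by copy, the overlaps recorded by `L` are at least the
overlaps among the pieces of `J`, which gives `∑ₑ (vₑ - 2) + p ≤ v(J) + L`.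
-/

open scoped Classical

namespace AsymRamsey

/-- The 2-density `d₂` of a graph with `v` vertices and `e` edges. -/
noncomputable def d2 (v e : ℕ) : ℝ :=
  if e = 0 then 0 else if 3 ≤ v then ((e : ℝ) - 1) / ((v : ℝ) - 2) else 1 / 2

/-- `m₂(H)`: the maximum of `d₂` over all subgraphs of `H`. -/
noncomputable def m2 {V : Type*} [Fintype V] (H : SimpleGraph V) : ℝ :=
  sSup {x : ℝ | ∃ J : H.Subgraph, x = d2 J.verts.ncard J.edgeSet.ncard}

/-- The asymmetric 2-density `d₂(G, ·)` applied to a graph with `v` vertices and `e` edges. -/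
noncomputable def d2a {V : Type*} [Fintype V] (G : SimpleGraph V) (v e : ℕ) : ℝ :=
  if G.edgeSet.ncard = 0 ∨ e = 0 then 0 else (e : ℝ) / ((v : ℝ) - 2 + 1 / m2 G)

/-- `m₂(G,H)`: the maximum of `d₂(G,·)` over all subgraphs of `H`. -/
noncomputable def m2a {V W : Type*} [Fintype V] [Fintype W]
    (G : SimpleGraph V) (H : SimpleGraph W) : ℝ :=
  sSup {x : ℝ | ∃ J : H.Subgraph, x = d2a G J.verts.ncard J.edgeSet.ncard}

/-- `H` is balanced with respect to `d₂(G,·)`. -/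
def BalancedW {V W : Type*} [Fintype V] [Fintype W]
    (G : SimpleGraph V) (H : SimpleGraph W) : Prop :=
  m2a G H = d2a G (Fintype.card W) H.edgeSet.ncard

/-- `H` is strictly balanced with respect to `d₂(G,·)`. -/
def StrictlyBalancedW {V W : Type*} [Fintype V] [Fintype W]
    (G : SimpleGraph V) (H : SimpleGraph W) : Prop :=
  BalancedW G H ∧
    ∀ J : H.Subgraph, J ≠ ⊤ → d2a G J.verts.ncard J.edgeSet.ncard < m2a G H

/-- `m*(H) = min {(e_H - e_J)/(v_H - v_J) : J ⊆ H, 2 ≤ v_J < v_H}`. -/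
noncomputable def mStar {W : Type*} [Fintype W] (H : SimpleGraph W) : ℝ :=
  sInf {x : ℝ | ∃ J : H.Subgraph, 2 ≤ J.verts.ncard ∧ J.verts.ncard < Fintype.card W ∧
    x = ((H.edgeSet.ncard : ℝ) - (J.edgeSet.ncard : ℝ)) /
        ((Fintype.card W : ℝ) - (J.verts.ncard : ℝ))}

/-- `x*(H) = m*(H) / (e_H - m*(H)(v_H - 2))`. -/
noncomputable def xStar {W : Type*} [Fintype W] (H : SimpleGraph W) : ℝ :=
  mStar H / ((H.edgeSet.ncard : ℝ) - mStar H * ((Fintype.card W : ℝ) - 2))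

/-- A graph is a matching if it has maximum degree at most 1. -/
def IsMatchingGraph {V : Type*} (G : SimpleGraph V) : Prop :=
  ∀ v : V, (G.neighborSet v).ncard ≤ 1

/-- `f` is (the embedding of) a copy of `H` in `F`. -/
def IsCopy {W V : Type*} (H : SimpleGraph W) (F : SimpleGraph V) (f : W ↪ V) : Prop :=
  ∀ ⦃u v : W⦄, H.Adj u v → F.Adj (f u) (f v)

/-- The edges of the copy of `H` given by the embedding `f`. -/
def copyEdges {W V : Type*} (H : SimpleGraph W) (f : W ↪ V) : Set (Sym2 V) :=
  Sym2.map (⇑f) '' H.edgeSet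

/-- `E_H(F)`: the union of the edge sets of all copies of `H` in `F` (the `H`-edges of `F`). -/
def HEdges {W V : Type*} (H : SimpleGraph W) (F : SimpleGraph V) : Set (Sym2 V) :=
  ⋃ f ∈ {f : W ↪ V | IsCopy H F f}, copyEdges H f

/-- `F → (G,H)`: every red-blue (true/false) coloring of the edges of `F` yields a
red copy of `G` or a blue copy of `H`. -/
def Arrows {α β γ : Type*} (F : SimpleGraph α) (G : SimpleGraph β) (H : SimpleGraph γ) : Prop :=
  ∀ c : Sym2 α → Bool,
    (∃ f : β ↪ α, IsCopy G F f ∧ ∀ e ∈ G.edgeSet, c (Sym2.map (⇑f) e) = true) ∨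
    (∃ f : γ ↪ α, IsCopy H F f ∧ ∀ e ∈ H.edgeSet, c (Sym2.map (⇑f) e) = false)

/-- `F` is Ramsey-critical for the pair `(G,H)`. -/
def Critical {α β γ : Type*} (F : SimpleGraph α) (G : SimpleGraph β) (H : SimpleGraph γ) : Prop :=
  Arrows F G H ∧ ∀ F' : F.Subgraph, F' ≠ ⊤ → ¬ Arrows F'.coe G H

/-- The probability that the binomial random graph `G_{n,p}` satisfies property `A`. -/
noncomputable def gnpProb (n : ℕ) (p : ℝ) (A : SimpleGraph (Fin n) → Prop) : ℝ :=
  ∑ S ∈ (Finset.univ.filter fun e : Sym2 (Fin n) => ¬ e.IsDiag).powerset,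
    if A (SimpleGraph.fromEdgeSet (↑S)) then p ^ S.card * (1 - p) ^ (n.choose 2 - S.card) else 0

/-- The edges of `F` induced on a vertex set `V`. -/
def EdgesIn {n : ℕ} (F : SimpleGraph (Fin n)) (V : Finset (Fin n)) : Set (Sym2 (Fin n)) :=
  {e ∈ F.edgeSet | ∀ v ∈ e, v ∈ V}

/-- `F` is `(ρ,d)`-dense. -/
def RhoDDense (n : ℕ) (ρ d : ℝ) (F : SimpleGraph (Fin n)) : Prop :=
  ∀ V : Finset (Fin n), ρ * (n : ℝ) ≤ (V.card : ℝ) →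
    d * (n.choose 2 : ℝ) ≤ ((EdgesIn F V).ncard : ℝ)

/-- The general density measure `d_{a,b}`. -/
noncomputable def dab (a b : ℝ) (v e : ℕ) : ℝ :=
  if e = 0 then 0 else ((e : ℝ) - a) / ((v : ℝ) - b)

/-- `m_{a,b}(H)`: the maximum of `d_{a,b}` over all subgraphs of `H`. -/
noncomputable def mab {W : Type*} [Fintype W] (a b : ℝ) (H : SimpleGraph W) : ℝ :=
  sSup {x : ℝ | ∃ J : H.Subgraph, x = dab a b J.verts.ncard J.edgeSet.ncard}

/-- `H` is balanced with respect to `d_{a,b}`. -/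
def BalancedAB {W : Type*} [Fintype W] (a b : ℝ) (H : SimpleGraph W) : Prop :=
  mab a b H = dab a b (Fintype.card W) H.edgeSet.ncard

/-- `H` is strictly balanced with respect to `d_{a,b}`. -/
def StrictlyBalancedAB {W : Type*} [Fintype W] (a b : ℝ) (H : SimpleGraph W) : Prop :=
  BalancedAB a b H ∧
    ∀ J : H.Subgraph, J ≠ ⊤ → dab a b J.verts.ncard J.edgeSet.ncard < mab a b H

end AsymRamsey

namespace Finset

variable {α ι : Type*}

theorem card_biUnion_add_sum_card_le {s : Finset ι} {A B : ι → Finset α}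
    (hAB : ∀ i ∈ s, A i ⊆ B i) :
    (s.biUnion B).card + ∑ i ∈ s, (A i).card ≤ (s.biUnion A).card + ∑ i ∈ s, (B i).card := by
  induction s using Finset.induction_on with
  | empty => simp
  | @insert j s hj ih =>
    simp only [biUnion_insert, sum_insert hj]
    have hA := card_union_add_card_inter (A j) (s.biUnion A)
    have hB := card_union_add_card_inter (B j) (s.biUnion B)
    have hAB' : A j ∩ s.biUnion A ⊆ B j ∩ s.biUnion B :=
      inter_subset_inter (hAB j (mem_insert_self j s))
        (biUnion_mono fun i hi => hAB i (mem_insert_of_mem hi))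
    have := card_le_card hAB'
    have := ih fun i hi => hAB i (mem_insert_of_mem hi)
    omega

theorem card_add_sum_card_inter_le {C B P : Finset α} {W U : ι → Finset α} {S : Finset ι}
    (hU : ∀ i ∈ S, U i ⊆ W i) (hB : B ⊆ C) (hP : P ⊆ B ∪ S.biUnion fun i => W i ∩ C) :
    P.card + ∑ i ∈ S, (U i ∩ C).card ≤
      ((B ∪ S.biUnion U) ∩ C).card + ∑ i ∈ S, (W i ∩ C).card := by
  have hP' : P ⊆ ((B ∪ S.biUnion U) ∩ C) ∪ S.biUnion fun i => (W i ∩ C) \ U i := by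
    intro v hv
    have hv := hP hv
    simp only [mem_union, mem_inter, mem_biUnion, mem_sdiff] at hv ⊢
    rcases hv with hvB | ⟨i, hi, hvW, hvC⟩
    · exact Or.inl ⟨Or.inl hvB, hB hvB⟩
    · by_cases hvU : v ∈ U i
      · exact Or.inl ⟨Or.inr ⟨i, hi, hvU⟩, hvC⟩
      · exact Or.inr ⟨i, hi, ⟨hvW, hvC⟩, hvU⟩
  have hsplit : ∀ i ∈ S, ((W i ∩ C) \ U i).card + (U i ∩ C).card = (W i ∩ C).card := by
    intro i hi
    rw [← card_sdiff_add_card_inter (W i ∩ C) (U i)]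
    congr 2
    ext v
    simp only [mem_inter]
    exact ⟨fun ⟨hvU, hvC⟩ => ⟨⟨hU i hi hvU, hvC⟩, hvU⟩, fun ⟨⟨_, hvC⟩, hvU⟩ => ⟨hvU, hvC⟩⟩
  calc P.card + ∑ i ∈ S, (U i ∩ C).card
      ≤ ((B ∪ S.biUnion U) ∩ C).card + ∑ i ∈ S, ((W i ∩ C) \ U i).card
          + ∑ i ∈ S, (U i ∩ C).card := by
        gcongr
        exact (card_le_card hP').trans
          ((card_union_le _ _).trans (by gcongr; exact card_biUnion_le))
    _ = ((B ∪ S.biUnion U) ∩ C).card + ∑ i ∈ S, (W i ∩ C).card := by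
        rw [add_assoc, ← sum_add_distrib, sum_congr rfl hsplit]

variable [Fintype α] [Fintype ι]

theorem card_le_card_add_sum_card_sdiff {C : Finset α} {W : ι → Finset α} (S : Finset ι)
    (hcover : ∀ v, v ∈ C ∨ ∃ i, v ∈ W i) :
    Fintype.card α ≤ C.card + (S.biUnion fun i => W i \ C).card +
      ∑ i ∈ univ \ S, (W i \ C).card := by
  have huniv : (univ : Finset α) ⊆ C ∪ (S.biUnion fun i => W i \ C) ∪
      (univ \ S).biUnion fun i => W i \ C := by
    intro v _
    simp only [mem_union, mem_biUnion, mem_sdiff, mem_univ, true_and]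
    rcases hcover v with hvC | ⟨i, hvW⟩
    · exact Or.inl (Or.inl hvC)
    · by_cases hvC : v ∈ C
      · exact Or.inl (Or.inl hvC)
      by_cases hi : i ∈ S
      · exact Or.inl (Or.inr ⟨i, hi, hvW, hvC⟩)
      · exact Or.inr ⟨i, hi, hvW, hvC⟩
  calc Fintype.card α ≤ (C ∪ (S.biUnion fun i => W i \ C) ∪
      (univ \ S).biUnion fun i => W i \ C).card := card_le_card huniv
    _ ≤ _ := by
      grw [card_union_le, card_union_le,
        card_biUnion_le (s := univ \ S)]

/-- In the application `C` is the central copy, `W i` are the copies of `H`, `U i` the vertices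
of `J` in `W i`, and `P` the central vertices of the edges whose copies `J` meets. -/
theorem sum_card_add_card_le {C B P : Finset α} {W U : ι → Finset α} {S : Finset ι}
    (hU : ∀ i ∈ S, U i ⊆ W i) (hW : ∀ i, 2 ≤ (W i ∩ C).card)
    (hcover : ∀ v, v ∈ C ∨ ∃ i, v ∈ W i) (hB : B ⊆ C)
    (hP : P ⊆ B ∪ S.biUnion fun i => W i ∩ C) :
    ∑ i ∈ S, (U i).card + P.card + Fintype.card α + 2 * Fintype.card ι ≤
      (B ∪ S.biUnion U).card + 2 * S.card + C.card + ∑ i, (W i).card := by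
  have hcore := card_add_sum_card_inter_le hU hB hP
  have hcov := card_le_card_add_sum_card_sdiff S hcover
  have hover := card_biUnion_add_sum_card_le (s := S) (A := fun i => U i \ C)
    (B := fun i => W i \ C) fun i hi => sdiff_subset_sdiff (hU i hi) le_rfl
  have hnew : (S.biUnion fun i => U i \ C).card ≤ ((B ∪ S.biUnion U) \ C).card :=
    card_le_card (biUnion_subset.2 fun i hi =>
      sdiff_subset_sdiff ((subset_biUnion_of_mem U hi).trans subset_union_right) le_rfl)
  have hA := card_inter_add_card_sdiff (B ∪ S.biUnion U) C
  have hUS : ∑ i ∈ S, (U i).card = ∑ i ∈ S, (U i ∩ C).card + ∑ i ∈ S, (U i \ C).card := by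
    rw [← sum_add_distrib]
    exact sum_congr rfl fun i _ => (card_inter_add_card_sdiff _ _).symm
  have hWS : ∑ i ∈ S, (W i).card = ∑ i ∈ S, (W i ∩ C).card + ∑ i ∈ S, (W i \ C).card := by
    rw [← sum_add_distrib]
    exact sum_congr rfl fun i _ => (card_inter_add_card_sdiff _ _).symm
  have hrest : ∑ i ∈ univ \ S, ((W i \ C).card + 2) ≤ ∑ i ∈ univ \ S, (W i).card :=
    sum_le_sum fun i _ => by
      have := card_inter_add_card_sdiff (W i) C
      have := hW i
      omega
  rw [sum_add_distrib, sum_const, smul_eq_mul] at hrest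
  have hsumW := sum_sdiff (subset_univ S) (f := fun i => (W i).card)
  have hcard := card_sdiff_add_card_eq_card (subset_univ S)
  rw [card_univ] at hcard
  omega

end Finset

theorem Set.ncard_eq_sum_ncard_inter {α ι : Type*} [Finite α] [Fintype ι] {s : Set α}
    {X : ι → Set α} (hs : s ⊆ ⋃ i, X i) (hX : Pairwise fun i j => Disjoint (X i) (X j)) :
    s.ncard = ∑ i, (s ∩ X i).ncard := by
  have hunion : s = ⋃ i, s ∩ X i := by rw [← Set.inter_iUnion, Set.inter_eq_left.2 hs]
  conv_lhs => rw [hunion]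
  rw [Set.ncard_iUnion_of_finite (fun _ => Set.toFinite _)
    (fun i j hij => (hX hij).mono Set.inter_subset_right Set.inter_subset_right),
    finsum_eq_sum_of_fintype]

namespace SimpleGraph

variable {V W : Type*}

@[simps]
def subgraphOfEdges (G : SimpleGraph V) (D : Set (Sym2 V)) (hD : D ⊆ G.edgeSet) : G.Subgraph where
  verts := {v | ∃ d ∈ D, v ∈ d}
  Adj a b := s(a, b) ∈ D
  adj_sub h := hD h
  edge_vert h := ⟨_, h, Sym2.mem_mk_left _ _⟩
  symm := ⟨fun _ _ h => by rwa [Sym2.eq_swap]⟩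

@[simp]
theorem edgeSet_subgraphOfEdges (G : SimpleGraph V) (D : Set (Sym2 V)) (hD : D ⊆ G.edgeSet) :
    (G.subgraphOfEdges D hD).edgeSet = D := by
  ext ⟨a, b⟩
  exact Subgraph.mem_edgeSet

namespace Subgraph

variable {G : SimpleGraph V} {H : SimpleGraph W}

theorem two_le_ncard_verts [Finite V] {K : G.Subgraph} (hK : K.edgeSet.Nonempty) :
    2 ≤ K.verts.ncard := by
  obtain ⟨⟨a, b⟩, hab⟩ := hK
  rw [Subgraph.mem_edgeSet] at hab
  rw [← Set.ncard_pair hab.ne]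
  exact Set.ncard_le_ncard (Set.pair_subset (K.edge_vert hab) (K.edge_vert hab.symm))

theorem three_le_ncard_verts [Finite V] {K : G.Subgraph} (hK : 1 < K.edgeSet.ncard) :
    3 ≤ K.verts.ncard := by
  obtain ⟨⟨a, b⟩, hab, ⟨c, d⟩, hcd, hne⟩ := (Set.one_lt_ncard).1 hK
  rw [Subgraph.mem_edgeSet] at hab hcd
  by_contra! hv
  have hpair : K.verts = {a, b} := (Set.eq_of_subset_of_ncard_le
    (Set.pair_subset (K.edge_vert hab) (K.edge_vert hab.symm))
    (by rw [Set.ncard_pair hab.ne]; omega)).symm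
  have hc := K.edge_vert hcd
  have hd := K.edge_vert hcd.symm
  rw [hpair] at hc hd
  rcases hc with rfl | rfl <;> rcases hd with rfl | rfl
  · exact hcd.ne rfl
  · exact hne rfl
  · exact hne Sym2.eq_swap
  · exact hcd.ne rfl

theorem ncard_verts_comap {f : H →g G} (hf : Function.Injective f) (J : G.Subgraph) :
    (J.comap f).verts.ncard = (J.verts ∩ Set.range f).ncard := by
  rw [← Set.ncard_image_of_injective _ hf, comap_verts, Set.image_preimage_eq_inter_range]

theorem ncard_edgeSet_comap {f : H →g G} (hf : Function.Injective f) (J : G.Subgraph) :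
    (J.comap f).edgeSet.ncard = (J.edgeSet ∩ Sym2.map f '' H.edgeSet).ncard := by
  rw [← Set.ncard_image_of_injective _ (Sym2.map.injective hf)]
  congr 1
  ext z
  constructor
  · rintro ⟨⟨a, b⟩, ⟨hab, hJ⟩, rfl⟩
    exact ⟨hJ, s(a, b), hab, rfl⟩
  · rintro ⟨hJ, ⟨a, b⟩, hab, rfl⟩
    exact ⟨s(a, b), ⟨hab, hJ⟩, rfl⟩

end Subgraph

end SimpleGraph

namespace AsymRamsey

section Densities

variable {V W : Type*} [Fintype V] [Fintype W] {G : SimpleGraph V} {H : SimpleGraph W}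

theorem d2_le_m2 (K : G.Subgraph) : d2 K.verts.ncard K.edgeSet.ncard ≤ m2 G :=
  le_csSup ((Set.finite_range fun J : G.Subgraph => d2 J.verts.ncard J.edgeSet.ncard).subset
    (by rintro _ ⟨J, rfl⟩; exact ⟨J, rfl⟩)).bddAbove ⟨K, rfl⟩

theorem d2a_le_m2a (K : H.Subgraph) : d2a G K.verts.ncard K.edgeSet.ncard ≤ m2a G H :=
  le_csSup ((Set.finite_range fun J : H.Subgraph => d2a G J.verts.ncard J.edgeSet.ncard).subset
    (by rintro _ ⟨J, rfl⟩; exact ⟨J, rfl⟩)).bddAbove ⟨K, rfl⟩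

theorem m2_pos (hG : G.edgeSet.Nonempty) : 0 < m2 G := by
  obtain ⟨⟨a, b⟩, hab⟩ := hG
  rw [SimpleGraph.mem_edgeSet] at hab
  have hd2 := d2_le_m2 (G.subgraphOfAdj hab)
  rw [SimpleGraph.subgraphOfAdj_verts, SimpleGraph.edgeSet_subgraphOfAdj, Set.ncard_pair hab.ne,
    Set.ncard_singleton] at hd2
  norm_num [d2] at hd2
  linarith

theorem m2_le_m2a (hG : G.edgeSet.Nonempty) (hH : H.edgeSet.Nonempty) : m2 G ≤ m2a G H := by
  obtain ⟨⟨a, b⟩, hab⟩ := hH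
  rw [SimpleGraph.mem_edgeSet] at hab
  have hd2a := d2a_le_m2a (G := G) (H.subgraphOfAdj hab)
  rw [SimpleGraph.subgraphOfAdj_verts, SimpleGraph.edgeSet_subgraphOfAdj, Set.ncard_pair hab.ne,
    Set.ncard_singleton] at hd2a
  simpa [d2a, Set.ncard_ne_zero_of_mem hG.some_mem] using hd2a

theorem ncard_edgeSet_sub_one_le_m2_mul {K : G.Subgraph} (hK : K.edgeSet.Nonempty) :
    (K.edgeSet.ncard : ℝ) - 1 ≤ m2 G * (K.verts.ncard - 2) := by
  have hm2 : 0 < m2 G := m2_pos (hK.mono K.edgeSet_subset)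
  have hv : (2 : ℝ) ≤ K.verts.ncard := by exact_mod_cast K.two_le_ncard_verts hK
  rcases (Nat.one_le_iff_ne_zero.2 (Set.ncard_ne_zero_of_mem hK.some_mem)).eq_or_lt with he | he
  · rw [← he]; push_cast; nlinarith
  · have hv : (3 : ℝ) ≤ K.verts.ncard := by exact_mod_cast K.three_le_ncard_verts he
    have hd2 := d2_le_m2 K
    rw [d2, if_neg (by omega), if_pos (by exact_mod_cast hv), div_le_iff₀ (by linarith)] at hd2
    linarith

theorem ncard_edgeSet_le_m2a_mul (hG : G.edgeSet.Nonempty) {K : H.Subgraph}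
    (hK : K.edgeSet.Nonempty) :
    (K.edgeSet.ncard : ℝ) ≤ m2a G H * (K.verts.ncard - 2 + 1 / m2 G) := by
  have hm2 : 0 < 1 / m2 G := one_div_pos.2 (m2_pos hG)
  have hv : (2 : ℝ) ≤ K.verts.ncard := by exact_mod_cast K.two_le_ncard_verts hK
  have hd2a := d2a_le_m2a (G := G) K
  rwa [d2a, if_neg (by simp [Set.ncard_ne_zero_of_mem hG.some_mem,
    Set.ncard_ne_zero_of_mem hK.some_mem]), div_le_iff₀ (by linarith)] at hd2a

end Densities

theorem mem_range_of_mem_copyEdges {V W : Type*} {H : SimpleGraph W} {f : W ↪ V} {z : Sym2 V}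
    (hz : z ∈ copyEdges H f) {v : V} (hv : v ∈ z) : v ∈ Set.range f := by
  obtain ⟨w, -, rfl⟩ := hz
  obtain ⟨a, -, rfl⟩ := Sym2.mem_map.1 hv
  exact ⟨a, rfl⟩

section Construction

variable {VG VH VT ι : Type*} [Fintype VG] [Fintype VH] [Fintype ι]
  {G : SimpleGraph VG} {H : SimpleGraph VH} {T : SimpleGraph VT}

theorem ncard_inter_copyEdges_le [Finite VT] (hG : G.edgeSet.Nonempty) {f : VH ↪ VT}
    (hf : IsCopy H T f) {J : T.Subgraph} (hJ : (J.edgeSet ∩ copyEdges H f).Nonempty) :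
    ((J.edgeSet ∩ copyEdges H f).ncard : ℝ) ≤
      m2a G H * ((J.verts ∩ Set.range f).ncard - 2 + 1 / m2 G) := by
  let φ : H →g T := ⟨f, fun h => hf h⟩
  have hφ : Function.Injective φ := f.injective
  have he : (J.comap φ).edgeSet.ncard = (J.edgeSet ∩ copyEdges H f).ncard :=
    J.ncard_edgeSet_comap hφ
  have hv : (J.comap φ).verts.ncard = (J.verts ∩ Set.range f).ncard := J.ncard_verts_comap hφ
  rw [← he, ← hv]
  exact ncard_edgeSet_le_m2a_mul hG
    (Set.nonempty_of_ncard_ne_zero (he ▸ Set.ncard_ne_zero_of_mem hJ.some_mem))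

theorem ncard_edgeSet_le_m2a_mul_sum [Finite VT] (hG : G.edgeSet.Nonempty) {f : ι → (VH ↪ VT)}
    (hf : ∀ i, IsCopy H T (f i)) (hT : T.edgeSet = ⋃ i, copyEdges H (f i))
    (hdisj : Pairwise fun i j => Disjoint (copyEdges H (f i)) (copyEdges H (f j)))
    (J : T.Subgraph) :
    (J.edgeSet.ncard : ℝ) ≤ m2a G H *
      ∑ i ∈ Finset.univ.filter fun i => (J.edgeSet ∩ copyEdges H (f i)).Nonempty,
        (((J.verts ∩ Set.range (f i)).ncard : ℝ) - 2 + 1 / m2 G) := by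
  rw [Set.ncard_eq_sum_ncard_inter (hT ▸ J.edgeSet_subset) hdisj, Finset.mul_sum, Nat.cast_sum,
    ← Finset.sum_filter_of_ne fun i _ h => Set.nonempty_of_ncard_ne_zero (by exact_mod_cast h)]
  exact Finset.sum_le_sum fun i hi => ncard_inter_copyEdges_le hG (hf i) (Finset.mem_filter.1 hi).2

theorem card_le_m2_mul_ncard_sub_two {G Gm : SimpleGraph VG} (hsub : Gm ≤ G) {x y : VG}
    (hxy : G.Adj x y) (hnxy : ¬ Gm.Adj x y) (S : Finset Gm.edgeSet) :
    (S.card : ℝ) ≤ m2 G *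
      ({v | ∃ d ∈ insert s(x, y) (Subtype.val '' (S : Set Gm.edgeSet)), v ∈ d}.ncard - 2) := by
  set D := insert s(x, y) (Subtype.val '' (S : Set Gm.edgeSet))
  have hD : D ⊆ G.edgeSet :=
    Set.insert_subset hxy (Set.image_subset_iff.2 fun e _ => SimpleGraph.edgeSet_mono hsub e.2)
  have hcard : D.ncard = S.card + 1 := by
    have hxyS : s(x, y) ∉ Subtype.val '' (S : Set Gm.edgeSet) := by
      rintro ⟨e, -, he⟩
      exact hnxy (he ▸ e.2 :)
    rw [Set.ncard_insert_of_notMem hxyS,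
      Set.ncard_image_of_injective _ Subtype.val_injective, Set.ncard_coe_finset]
  have hK := ncard_edgeSet_sub_one_le_m2_mul (K := G.subgraphOfEdges D hD)
    (by rw [SimpleGraph.edgeSet_subgraphOfEdges]; exact Set.insert_nonempty _ _)
  rw [SimpleGraph.edgeSet_subgraphOfEdges, hcard, SimpleGraph.subgraphOfEdges_verts] at hK
  push_cast at hK
  linarith

theorem two_le_card_range_inter {Gm : SimpleGraph VG} {central : VG ↪ VT}
    {cov : Gm.edgeSet → (VH ↪ VT)}
    (hin : ∀ e : Gm.edgeSet, Sym2.map central e.1 ∈ copyEdges H (cov e)) (e : Gm.edgeSet) :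
    2 ≤ ((Set.range (cov e)).toFinset ∩ (Set.range central).toFinset).card := by
  obtain ⟨⟨a, b⟩, hab⟩ := e
  rw [← Finset.card_pair (central.injective.ne (SimpleGraph.mem_edgeSet _ |>.1 hab).ne)]
  refine Finset.card_le_card (Finset.insert_subset ?_ (Finset.singleton_subset_iff.2 ?_))
  all_goals simp only [Finset.mem_inter, Set.mem_toFinset, Set.mem_range_self, and_true]
  · exact mem_range_of_mem_copyEdges (hin _) (Sym2.mem_mk_left _ _)
  · exact mem_range_of_mem_copyEdges (hin _) (Sym2.mem_mk_right _ _)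

theorem map_toFinset_subset {Gm : SimpleGraph VG} {central : VG ↪ VT}
    {cov : Gm.edgeSet → (VH ↪ VT)}
    (hin : ∀ e : Gm.edgeSet, Sym2.map central e.1 ∈ copyEdges H (cov e)) (x y : VG)
    (S : Finset Gm.edgeSet) :
    {v | ∃ d ∈ insert s(x, y) (Subtype.val '' (S : Set Gm.edgeSet)), v ∈ d}.toFinset.map central ⊆
      {central x, central y} ∪
        S.biUnion fun e => (Set.range (cov e)).toFinset ∩ (Set.range central).toFinset := by
  intro w hw
  obtain ⟨v, hv, rfl⟩ := Finset.mem_map.1 hw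
  obtain ⟨d, hd, hvd⟩ := Set.mem_toFinset.1 hv
  simp only [Finset.mem_union, Finset.mem_insert, Finset.mem_singleton, Finset.mem_biUnion,
    Finset.mem_inter, Set.mem_toFinset, Set.mem_range_self, and_true]
  rcases hd with rfl | ⟨e, he, rfl⟩
  · rcases Sym2.mem_iff.1 hvd with rfl | rfl <;> simp
  · exact Or.inr ⟨e, he, mem_range_of_mem_copyEdges (hin e) (Sym2.mem_map.2 ⟨v, hvd, rfl⟩)⟩

theorem sum_ncard_add_ncard_le [Fintype VT] {Gm : SimpleGraph VG} {central : VG ↪ VT}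
    {cov : Gm.edgeSet → (VH ↪ VT)}
    (hin : ∀ e : Gm.edgeSet, Sym2.map central e.1 ∈ copyEdges H (cov e))
    (hvertT : (Set.univ : Set VT) = Set.range central ∪ ⋃ e, Set.range (cov e))
    {x y : VG} {J : T.Subgraph} (hxJ : central x ∈ J.verts) (hyJ : central y ∈ J.verts)
    (S : Finset Gm.edgeSet) :
    ∑ e ∈ S, (J.verts ∩ Set.range (cov e)).ncard +
        {v | ∃ d ∈ insert s(x, y) (Subtype.val '' (S : Set Gm.edgeSet)), v ∈ d}.ncard +
        Fintype.card VT + 2 * Gm.edgeSet.ncard ≤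
      J.verts.ncard + 2 * S.card + Fintype.card VG + Gm.edgeSet.ncard * Fintype.card VH := by
  have hcount := Finset.sum_card_add_card_le
    (U := fun e => (J.verts ∩ Set.range (cov e)).toFinset)
    (fun e _ => Set.toFinset_subset_toFinset.2 Set.inter_subset_right) (two_le_card_range_inter hin)
    (fun v => by
      have hv : v ∈ (Set.univ : Set VT) := trivial
      rw [hvertT, Set.mem_union, Set.mem_iUnion] at hv
      simpa only [Set.mem_toFinset] using hv)
    (by simp [Finset.insert_subset_iff]) (map_toFinset_subset hin x y S)
  have hA : ({central x, central y} ∪ S.biUnion fun e =>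
      (J.verts ∩ Set.range (cov e)).toFinset).card ≤ J.verts.ncard := by
    rw [Set.ncard_eq_toFinset_card']
    refine Finset.card_le_card (Finset.union_subset ?_ (Finset.biUnion_subset.2 fun e _ =>
      Set.toFinset_subset_toFinset.2 Set.inter_subset_left))
    exact Finset.insert_subset (Set.mem_toFinset.2 hxJ)
      (Finset.singleton_subset_iff.2 (Set.mem_toFinset.2 hyJ))
  simp only [Finset.card_map, ← Set.ncard_eq_toFinset_card', Finset.sum_const, Finset.card_univ,
    smul_eq_mul, Set.ncard_range_of_injective central.injective,
    Set.ncard_range_of_injective (cov _).injective, Nat.card_eq_fintype_card (α := VG),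
    Nat.card_eq_fintype_card (α := VH)] at hcount
  have hι : Fintype.card Gm.edgeSet = Gm.edgeSet.ncard := by
    rw [← Nat.card_eq_fintype_card, Nat.card_coe_set_eq]
  rw [hι] at hcount
  omega

end Construction

theorem stmt6_general {VG VH VT : Type*} [Fintype VG] [Fintype VH] [Fintype VT]
    (G Gm : SimpleGraph VG) (H : SimpleGraph VH) (T : SimpleGraph VT)
    (hHne : H.edgeSet.Nonempty)
    (hsub : Gm ≤ G)
    (central : VG ↪ VT) (cov : Gm.edgeSet → (VH ↪ VT))
    (hcov : ∀ e : Gm.edgeSet, IsCopy H T (cov e))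
    (hdisj : ∀ e e' : Gm.edgeSet, e ≠ e' →
      Disjoint (copyEdges H (cov e)) (copyEdges H (cov e')))
    (hin : ∀ e : Gm.edgeSet, Sym2.map (⇑central) e.1 ∈ copyEdges H (cov e))
    (hedgeT : T.edgeSet = ⋃ e : Gm.edgeSet, copyEdges H (cov e))
    (hvertT : (Set.univ : Set VT) =
      Set.range (⇑central) ∪ ⋃ e : Gm.edgeSet, Set.range (⇑(cov e)))
    (x y : VG) (hxy : G.Adj x y) (hnxy : ¬ Gm.Adj x y)
    (J : T.Subgraph) (hxJ : central x ∈ J.verts) (hyJ : central y ∈ J.verts) :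
    2 - ((Fintype.card VG : ℝ) + (Gm.edgeSet.ncard : ℝ) * ((Fintype.card VH : ℝ) - 2) -
          (Fintype.card VT : ℝ)) ≤
      (J.verts.ncard : ℝ) - (J.edgeSet.ncard : ℝ) / m2a G H := by
  have hG : G.edgeSet.Nonempty := ⟨s(x, y), hxy⟩
  have hm2a : 0 < m2a G H := (m2_pos hG).trans_le (m2_le_m2a hG hHne)
  have hcopies := ncard_edgeSet_le_m2a_mul_sum hG hcov hedgeT (fun e e' h => hdisj e e' h) J
  set S := Finset.univ.filter fun e => (J.edgeSet ∩ copyEdges H (cov e)).Nonempty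
  have hcore := card_le_m2_mul_ncard_sub_two hsub hxy hnxy S
  have hverts := sum_ncard_add_ncard_le hin hvertT hxJ hyJ S
  rw [← div_le_iff₀' hm2a, Finset.sum_add_distrib, Finset.sum_sub_distrib] at hcopies
  rw [← div_le_iff₀' (m2_pos hG)] at hcore
  simp only [Finset.sum_const, nsmul_eq_mul, mul_one_div] at hcopies
  have hverts' := (Nat.cast_le (α := ℝ)).2 hverts
  push_cast at hverts'
  linarith

/-- Lemma 10: let `G` be a graph that is not a matching, `H` nonempty, and
`G₋ ⊆ G` a spanning subgraph with one edge fewer.  Let `T ∈ F(G₋,H)` be witnessed by a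
central copy `central` of `G₋` and pairwise edge-disjoint copies `cov e` of `H` (one for each
edge `e` of `G₋`, containing the image of `e`), whose edges make up all of `T` and whose
vertices together with the central copy exhaust the vertices of `T`.  If the pair `{x,y}`
completes the central copy of `G₋` to a copy of `G`, then every subgraph `J ⊆ T` containing
`central x` and `central y` satisfies `v(J) - e(J)/m₂(G,H) ≥ 2 - L(T)`, where
`L(T) = v_{G₋} + e_{G₋}(v_H - 2) - v(T)`. -/
theorem stmt6 {VG VH VT : Type*} [Fintype VG] [Fintype VH] [Fintype VT]
    (G Gm : SimpleGraph VG) (H : SimpleGraph VH) (T : SimpleGraph VT)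
    (hGmatch : ¬ IsMatchingGraph G) (hHne : H.edgeSet.Nonempty)
    (hsub : Gm ≤ G) (hedges : Gm.edgeSet.ncard = G.edgeSet.ncard - 1)
    (central : VG ↪ VT) (cov : Gm.edgeSet → (VH ↪ VT))
    (hcentral : IsCopy Gm T central)
    (hcov : ∀ e : Gm.edgeSet, IsCopy H T (cov e))
    (hdisj : ∀ e e' : Gm.edgeSet, e ≠ e' →
      Disjoint (copyEdges H (cov e)) (copyEdges H (cov e')))
    (hin : ∀ e : Gm.edgeSet, Sym2.map (⇑central) e.1 ∈ copyEdges H (cov e))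
    (hedgeT : T.edgeSet = ⋃ e : Gm.edgeSet, copyEdges H (cov e))
    (hvertT : (Set.univ : Set VT) =
      Set.range (⇑central) ∪ ⋃ e : Gm.edgeSet, Set.range (⇑(cov e)))
    (x y : VG) (hxy : G.Adj x y) (hnxy : ¬ Gm.Adj x y)
    (J : T.Subgraph) (hxJ : central x ∈ J.verts) (hyJ : central y ∈ J.verts) :
    2 - ((Fintype.card VG : ℝ) + (Gm.edgeSet.ncard : ℝ) * ((Fintype.card VH : ℝ) - 2) -
          (Fintype.card VT : ℝ)) ≤
      (J.verts.ncard : ℝ) - (J.edgeSet.ncard : ℝ) / m2a G H :=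
  stmt6_general G Gm H T hHne hsub central cov hcov hdisj hin hedgeT hvertT x y hxy hnxy J hxJ hyJ

end AsymRamsey
end

section
/- Let a ≤ 1 and b < 2 be real numbers and let H be a graph with v_H ≥ 3. Then H is balanced with respect to d_{a,b} if and only if m*(H) ≥ d_{a,b}(H) (equivalently, if and only if m*(H) ≥ m_{a,b}(H)); similarly, H is strictly balanced with respect to d_{a,b} if and only if m*(H) > d_{a,b}(H) (equivalently, if and only if m*(H) > m_{a,b}(H)). -/
open scoped Classical

namespace AsymRamsey

/-! For a subgraph `J` with an edge and fewer vertices than `H`, `d(H) = (e_H - a)/(v_H - b)`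
is the mediant of `d(J) = (e_J - a)/(v_J - b)` and `(e_H - e_J)/(v_H - v_J)`, all denominators
being positive as `b < 2 ≤ v_J`; hence `d(J) ≤ d(H) ↔ d(H) ≤ (e_H - e_J)/(v_H - v_J)`, and the
same with strict inequalities. An edgeless `J` is compared with a single edge `K₂ ⊆ H`, since
`(e_H - 1)/(v_H - 2) < e_H/(v_H - v_J)`, and a spanning `J` by monotonicity of `d` in the number
of edges. -/

lemma div_le_div_iff_div_le_sub_div_sub {x y u v : ℝ} (hu : 0 < u) (huv : u < v) :
    x / u ≤ y / v ↔ y / v ≤ (y - x) / (v - u) := by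
  rw [div_le_div_iff₀ hu (hu.trans huv), div_le_div_iff₀ (hu.trans huv) (sub_pos.2 huv)]
  constructor <;> intro h <;> linarith

lemma div_lt_div_iff_div_lt_sub_div_sub {x y u v : ℝ} (hu : 0 < u) (huv : u < v) :
    x / u < y / v ↔ y / v < (y - x) / (v - u) := by
  rw [div_lt_div_iff₀ hu (hu.trans huv), div_lt_div_iff₀ (hu.trans huv) (sub_pos.2 huv)]
  constructor <;> intro h <;> linarith

section Density

variable {a b : ℝ} {v e e' : ℕ}

lemma dab_zero (a b : ℝ) (v : ℕ) : dab a b v 0 = 0 := if_pos rfl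

lemma dab_of_ne_zero (he : e ≠ 0) : dab a b v e = ((e : ℝ) - a) / ((v : ℝ) - b) := if_neg he

lemma dab_nonneg (ha : a ≤ 1) (hv : b < v) : 0 ≤ dab a b v e := by
  rcases eq_or_ne e 0 with rfl | he
  · rw [dab_zero]
  · have : (1 : ℝ) ≤ e := by exact_mod_cast Nat.one_le_iff_ne_zero.2 he
    rw [dab_of_ne_zero he]
    exact div_nonneg (by linarith) (by linarith)

lemma dab_le_dab_of_le (hv : b < v) (he : e ≠ 0) (hee' : e ≤ e') :
    dab a b v e ≤ dab a b v e' := by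
  rw [dab_of_ne_zero he, dab_of_ne_zero (by omega)]
  gcongr

lemma dab_lt_dab_of_lt (hv : b < v) (he : e ≠ 0) (hee' : e < e') :
    dab a b v e < dab a b v e' := by
  rw [dab_of_ne_zero he, dab_of_ne_zero (by omega)]
  gcongr

end Density

section Subgraph

variable {W : Type*} {H : SimpleGraph W}

lemma ncard_edgeSet_subgraphOfAdj {u v : W} (huv : H.Adj u v) :
    (H.subgraphOfAdj huv).edgeSet.ncard = 1 := by
  rw [SimpleGraph.edgeSet_subgraphOfAdj, Set.ncard_singleton]

lemma ncard_verts_subgraphOfAdj {u v : W} (huv : H.Adj u v) :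
    (H.subgraphOfAdj huv).verts.ncard = 2 := by
  rw [SimpleGraph.subgraphOfAdj_verts, Set.ncard_pair huv.ne]

lemma exists_adj_of_ncard_edgeSet_ne_zero (hH : H.edgeSet.ncard ≠ 0) : ∃ u v, H.Adj u v := by
  obtain ⟨e, he⟩ := Set.nonempty_of_ncard_ne_zero hH
  induction e using Sym2.ind with
  | _ u v => exact ⟨u, v, he⟩

variable [Fintype W]

lemma ncard_edgeSet_le (J : H.Subgraph) : J.edgeSet.ncard ≤ H.edgeSet.ncard :=
  Set.ncard_le_ncard J.edgeSet_subset

lemma ncard_verts_le (J : H.Subgraph) : J.verts.ncard ≤ Fintype.card W :=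
  Nat.card_eq_fintype_card (α := W) ▸ Set.ncard_le_card _

lemma ncard_verts_top : (⊤ : H.Subgraph).verts.ncard = Fintype.card W := by
  rw [SimpleGraph.Subgraph.verts_top, Set.ncard_univ, Nat.card_eq_fintype_card]

lemma two_le_ncard_verts (J : H.Subgraph) (hJ : J.edgeSet.ncard ≠ 0) : 2 ≤ J.verts.ncard := by
  obtain ⟨e, he⟩ := Set.nonempty_of_ncard_ne_zero hJ
  induction e using Sym2.ind with
  | _ u v =>
    have huv : J.Adj u v := he
    rw [← Set.ncard_pair (J.adj_sub huv).ne]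
    exact Set.ncard_le_ncard (Set.pair_subset (J.edge_vert huv) (J.edge_vert huv.symm))

lemma ncard_edgeSet_lt_of_ne_top {J : H.Subgraph} (hJ : J ≠ ⊤)
    (hv : J.verts.ncard = Fintype.card W) : J.edgeSet.ncard < H.edgeSet.ncard := by
  refine (ncard_edgeSet_le J).lt_of_ne fun he ↦ hJ ?_
  have hverts : J.verts = Set.univ :=
    Set.eq_of_subset_of_ncard_le (Set.subset_univ _)
      (by rw [hv, Set.ncard_univ, Nat.card_eq_fintype_card])
  have hedges : J.edgeSet = H.edgeSet := Set.eq_of_subset_of_ncard_le J.edgeSet_subset he.ge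
  ext u v
  · simp [hverts]
  · rw [SimpleGraph.Subgraph.top_adj, ← SimpleGraph.mem_edgeSet, ← hedges,
      SimpleGraph.Subgraph.mem_edgeSet]

lemma ne_top_of_ncard_verts_lt {J : H.Subgraph} (hlt : J.verts.ncard < Fintype.card W) :
    J ≠ ⊤ := by
  rintro rfl
  exact hlt.ne ncard_verts_top

lemma exists_edgeless_of_two_le_card (hW : 2 ≤ Fintype.card W) :
    ∃ J : H.Subgraph, J.verts.ncard = 2 ∧ J.edgeSet.ncard = 0 := by
  obtain ⟨u, v, huv⟩ := Fintype.exists_pair_of_one_lt_card hW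
  refine ⟨(⊥ : H.Subgraph).induce {u, v}, Set.ncard_pair huv, ?_⟩
  convert Set.ncard_empty (Sym2 W)
  ext e
  induction e using Sym2.ind with
  | _ x y => simp

end Subgraph

section Balanced

variable {W : Type*} [Fintype W] {a b : ℝ} {H : SimpleGraph W}

lemma le_mab (J : H.Subgraph) : dab a b J.verts.ncard J.edgeSet.ncard ≤ mab a b H := by
  refine le_csSup ((Set.finite_range fun J : H.Subgraph ↦
    dab a b J.verts.ncard J.edgeSet.ncard).subset ?_).bddAbove ⟨J, rfl⟩
  rintro _ ⟨K, rfl⟩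
  exact ⟨K, rfl⟩

lemma dab_le_mab : dab a b (Fintype.card W) H.edgeSet.ncard ≤ mab a b H := by
  simpa only [ncard_verts_top, SimpleGraph.Subgraph.edgeSet_top] using
    le_mab (H := H) (a := a) (b := b) ⊤

lemma balancedAB_iff : BalancedAB a b H ↔
    ∀ J : H.Subgraph, dab a b J.verts.ncard J.edgeSet.ncard ≤
      dab a b (Fintype.card W) H.edgeSet.ncard := by
  refine ⟨fun h J ↦ h ▸ le_mab J, fun h ↦ dab_le_mab.antisymm' ?_⟩
  exact csSup_le ⟨_, ⊤, rfl⟩ (by rintro _ ⟨J, rfl⟩; exact h J)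

end Balanced

section MStar

variable {W : Type*} [Fintype W] (H : SimpleGraph W)

noncomputable def extDensity (J : H.Subgraph) : ℝ :=
  ((H.edgeSet.ncard : ℝ) - J.edgeSet.ncard) / ((Fintype.card W : ℝ) - J.verts.ncard)

def extDensities : Set ℝ :=
  {x | ∃ J : H.Subgraph, 2 ≤ J.verts.ncard ∧ J.verts.ncard < Fintype.card W ∧
    x = extDensity H J}

lemma mStar_eq_sInf_extDensities : mStar H = sInf (extDensities H) := rfl

lemma finite_extDensities : (extDensities H).Finite :=
  (Set.finite_range (extDensity H)).subset fun _ ⟨J, _, _, hx⟩ ↦ ⟨J, hx.symm⟩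

variable {H}

lemma nonempty_extDensities (hW : 3 ≤ Fintype.card W) : (extDensities H).Nonempty := by
  obtain ⟨J, hv, -⟩ := exists_edgeless_of_two_le_card (H := H) (by omega)
  exact ⟨_, J, hv.ge, by omega, rfl⟩

lemma mStar_le_extDensity {J : H.Subgraph} (h2 : 2 ≤ J.verts.ncard)
    (hlt : J.verts.ncard < Fintype.card W) : mStar H ≤ extDensity H J :=
  csInf_le (finite_extDensities H).bddBelow ⟨J, h2, hlt, rfl⟩

lemma le_mStar_iff (hW : 3 ≤ Fintype.card W) {c : ℝ} : c ≤ mStar H ↔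
    ∀ J : H.Subgraph, 2 ≤ J.verts.ncard → J.verts.ncard < Fintype.card W →
      c ≤ extDensity H J := by
  rw [mStar_eq_sInf_extDensities,
    le_csInf_iff (finite_extDensities H).bddBelow (nonempty_extDensities hW)]
  exact ⟨fun h J h2 hlt ↦ h _ ⟨J, h2, hlt, rfl⟩,
    by rintro h _ ⟨J, h2, hlt, rfl⟩; exact h J h2 hlt⟩

lemma lt_mStar_iff (hW : 3 ≤ Fintype.card W) {c : ℝ} : c < mStar H ↔
    ∀ J : H.Subgraph, 2 ≤ J.verts.ncard → J.verts.ncard < Fintype.card W →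
      c < extDensity H J := by
  rw [mStar_eq_sInf_extDensities,
    (finite_extDensities H).lt_csInf_iff (nonempty_extDensities hW)]
  exact ⟨fun h J h2 hlt ↦ h _ ⟨J, h2, hlt, rfl⟩,
    by rintro h _ ⟨J, h2, hlt, rfl⟩; exact h J h2 hlt⟩

lemma extDensity_subgraphOfAdj {u v : W} (huv : H.Adj u v) :
    extDensity H (H.subgraphOfAdj huv) =
      ((H.edgeSet.ncard : ℝ) - 1) / ((Fintype.card W : ℝ) - 2) := by
  rw [extDensity, ncard_edgeSet_subgraphOfAdj, ncard_verts_subgraphOfAdj]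
  norm_num

lemma extDensity_subgraphOfAdj_lt {u v : W} (huv : H.Adj u v) {J : H.Subgraph}
    (hJ : J.edgeSet.ncard = 0) (h2 : 2 ≤ J.verts.ncard) (hlt : J.verts.ncard < Fintype.card W) :
    extDensity H (H.subgraphOfAdj huv) < extDensity H J := by
  have h2' : (2 : ℝ) ≤ J.verts.ncard := by exact_mod_cast h2
  have hlt' : (J.verts.ncard : ℝ) < Fintype.card W := by exact_mod_cast hlt
  rw [extDensity_subgraphOfAdj, extDensity, hJ, Nat.cast_zero, sub_zero]
  calc ((H.edgeSet.ncard : ℝ) - 1) / ((Fintype.card W : ℝ) - 2)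
      < H.edgeSet.ncard / ((Fintype.card W : ℝ) - 2) := by gcongr <;> linarith
    _ ≤ H.edgeSet.ncard / ((Fintype.card W : ℝ) - J.verts.ncard) := by gcongr

end MStar

section Criterion

variable {W : Type*} [Fintype W] {a b : ℝ} {H : SimpleGraph W} (hb : b < 2)
include hb

lemma dab_le_dab_iff_le_extDensity {J : H.Subgraph} (hJ : J.edgeSet.ncard ≠ 0)
    (hlt : J.verts.ncard < Fintype.card W) :
    dab a b J.verts.ncard J.edgeSet.ncard ≤ dab a b (Fintype.card W) H.edgeSet.ncard ↔
      dab a b (Fintype.card W) H.edgeSet.ncard ≤ extDensity H J := by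
  have h2 : (2 : ℝ) ≤ J.verts.ncard := by exact_mod_cast two_le_ncard_verts J hJ
  rw [dab_of_ne_zero hJ, dab_of_ne_zero (by have := ncard_edgeSet_le J; omega),
    div_le_div_iff_div_le_sub_div_sub (by linarith) (by gcongr), extDensity]
  ring_nf

lemma dab_lt_dab_iff_lt_extDensity {J : H.Subgraph} (hJ : J.edgeSet.ncard ≠ 0)
    (hlt : J.verts.ncard < Fintype.card W) :
    dab a b J.verts.ncard J.edgeSet.ncard < dab a b (Fintype.card W) H.edgeSet.ncard ↔
      dab a b (Fintype.card W) H.edgeSet.ncard < extDensity H J := by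
  have h2 : (2 : ℝ) ≤ J.verts.ncard := by exact_mod_cast two_le_ncard_verts J hJ
  rw [dab_of_ne_zero hJ, dab_of_ne_zero (by have := ncard_edgeSet_le J; omega),
    div_lt_div_iff_div_lt_sub_div_sub (by linarith) (by gcongr), extDensity]
  ring_nf

variable (hW : 3 ≤ Fintype.card W)
include hW

lemma dab_lt_extDensity_of_edgeless
    (hbal : ∀ J : H.Subgraph, dab a b J.verts.ncard J.edgeSet.ncard ≤
      dab a b (Fintype.card W) H.edgeSet.ncard)
    (hH : H.edgeSet.ncard ≠ 0) {J : H.Subgraph} (hJ : J.edgeSet.ncard = 0)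
    (h2 : 2 ≤ J.verts.ncard) (hlt : J.verts.ncard < Fintype.card W) :
    dab a b (Fintype.card W) H.edgeSet.ncard < extDensity H J := by
  obtain ⟨u, v, huv⟩ := exists_adj_of_ncard_edgeSet_ne_zero hH
  have hK := dab_le_dab_iff_le_extDensity (a := a) hb
    (by rw [ncard_edgeSet_subgraphOfAdj huv]; norm_num)
    (by rw [ncard_verts_subgraphOfAdj huv]; omega)
  exact (hK.1 (hbal _)).trans_lt (extDensity_subgraphOfAdj_lt huv hJ h2 hlt)

lemma dab_le_extDensity_of_balancedAB (hB : BalancedAB a b H) {J : H.Subgraph}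
    (h2 : 2 ≤ J.verts.ncard) (hlt : J.verts.ncard < Fintype.card W) :
    dab a b (Fintype.card W) H.edgeSet.ncard ≤ extDensity H J := by
  have hbal := balancedAB_iff.1 hB
  by_cases hJ : J.edgeSet.ncard = 0
  · by_cases hH : H.edgeSet.ncard = 0
    · simp [extDensity, hH, hJ, dab_zero]
    · exact (dab_lt_extDensity_of_edgeless hb hW hbal hH hJ h2 hlt).le
  · exact (dab_le_dab_iff_le_extDensity hb hJ hlt).1 (hbal J)

lemma dab_lt_extDensity_of_strictlyBalancedAB (hS : StrictlyBalancedAB a b H)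
    {J : H.Subgraph} (h2 : 2 ≤ J.verts.ncard) (hlt : J.verts.ncard < Fintype.card W) :
    dab a b (Fintype.card W) H.edgeSet.ncard < extDensity H J := by
  obtain ⟨hB, hstrict⟩ := hS
  replace hstrict : ∀ K : H.Subgraph, K ≠ ⊤ → dab a b K.verts.ncard K.edgeSet.ncard <
      dab a b (Fintype.card W) H.edgeSet.ncard := fun K hK ↦ hB ▸ hstrict K hK
  have hH : H.edgeSet.ncard ≠ 0 := by
    intro hH
    obtain ⟨K, hK2, hK0⟩ := exists_edgeless_of_two_le_card (H := H) (by omega)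
    have := hstrict K (ne_top_of_ncard_verts_lt (by omega))
    rw [hK0, hH, dab_zero, dab_zero] at this
    exact this.false
  by_cases hJ : J.edgeSet.ncard = 0
  · exact dab_lt_extDensity_of_edgeless hb hW (balancedAB_iff.1 hB) hH hJ h2 hlt
  · exact (dab_lt_dab_iff_lt_extDensity hb hJ hlt).1 (hstrict J (ne_top_of_ncard_verts_lt hlt))

variable (ha : a ≤ 1)
include ha

lemma dab_le_of_le_mStar (h : dab a b (Fintype.card W) H.edgeSet.ncard ≤ mStar H)
    (J : H.Subgraph) :
    dab a b J.verts.ncard J.edgeSet.ncard ≤ dab a b (Fintype.card W) H.edgeSet.ncard := by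
  have hbW : b < (Fintype.card W : ℝ) := by
    have : (3 : ℝ) ≤ Fintype.card W := by exact_mod_cast hW
    linarith
  by_cases hJ : J.edgeSet.ncard = 0
  · rw [hJ, dab_zero]
    exact dab_nonneg ha hbW
  rcases (ncard_verts_le J).lt_or_eq with hlt | hv
  · exact (dab_le_dab_iff_le_extDensity hb hJ hlt).2
      (h.trans (mStar_le_extDensity (two_le_ncard_verts J hJ) hlt))
  · rw [hv]
    exact dab_le_dab_of_le hbW hJ (ncard_edgeSet_le J)

lemma dab_pos_of_lt_mStar (h : dab a b (Fintype.card W) H.edgeSet.ncard < mStar H) :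
    0 < dab a b (Fintype.card W) H.edgeSet.ncard := by
  have hW' : (3 : ℝ) ≤ Fintype.card W := by exact_mod_cast hW
  have hH : H.edgeSet.ncard ≠ 0 := by
    intro hH
    obtain ⟨J, hJ2, hJ0⟩ := exists_edgeless_of_two_le_card (H := H) (by omega)
    have := h.trans_le (mStar_le_extDensity hJ2.ge (by omega))
    simp [extDensity, hH, hJ0, dab_zero] at this
  obtain ⟨u, v, huv⟩ := exists_adj_of_ncard_edgeSet_ne_zero hH
  have hK := h.trans_le (mStar_le_extDensity (J := H.subgraphOfAdj huv)
    (ncard_verts_subgraphOfAdj huv).ge (by rw [ncard_verts_subgraphOfAdj huv]; omega))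
  rw [extDensity_subgraphOfAdj] at hK
  have hH1 : (1 : ℝ) < H.edgeSet.ncard := by
    have := (dab_nonneg ha (by linarith)).trans_lt hK
    linarith [(div_pos_iff_of_pos_right (by linarith : (0 : ℝ) < Fintype.card W - 2)).1 this]
  rw [dab_of_ne_zero hH]
  exact div_pos (by linarith) (by linarith)

lemma dab_lt_of_lt_mStar (h : dab a b (Fintype.card W) H.edgeSet.ncard < mStar H)
    {J : H.Subgraph} (hJtop : J ≠ ⊤) :
    dab a b J.verts.ncard J.edgeSet.ncard < dab a b (Fintype.card W) H.edgeSet.ncard := by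
  by_cases hJ : J.edgeSet.ncard = 0
  · rw [hJ, dab_zero]
    exact dab_pos_of_lt_mStar hb hW ha h
  rcases (ncard_verts_le J).lt_or_eq with hlt | hv
  · exact (dab_lt_dab_iff_lt_extDensity hb hJ hlt).2
      (h.trans_le (mStar_le_extDensity (two_le_ncard_verts J hJ) hlt))
  · rw [hv]
    have : (3 : ℝ) ≤ Fintype.card W := by exact_mod_cast hW
    exact dab_lt_dab_of_lt (by linarith) hJ (ncard_edgeSet_lt_of_ne_top hJtop hv)

end Criterion

/-- Lemma 5: for `a ≤ 1`, `b < 2` and a graph `H` with `v_H ≥ 3`: `H` is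
balanced w.r.t. `d_{a,b}` iff `m*(H) ≥ d_{a,b}(H)` (equivalently iff `m*(H) ≥ m_{a,b}(H)`),
and strictly balanced w.r.t. `d_{a,b}` iff `m*(H) > d_{a,b}(H)` (equivalently iff
`m*(H) > m_{a,b}(H)`). -/
theorem stmt8 {W : Type*} [Fintype W] (a b : ℝ) (ha : a ≤ 1) (hb : b < 2)
    (H : SimpleGraph W) (hW : 3 ≤ Fintype.card W) :
    (BalancedAB a b H ↔ dab a b (Fintype.card W) H.edgeSet.ncard ≤ mStar H) ∧
    (BalancedAB a b H ↔ mab a b H ≤ mStar H) ∧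
    (StrictlyBalancedAB a b H ↔ dab a b (Fintype.card W) H.edgeSet.ncard < mStar H) ∧
    (StrictlyBalancedAB a b H ↔ mab a b H < mStar H) := by
  have hdab_le_mab : dab a b (Fintype.card W) H.edgeSet.ncard ≤ mab a b H := dab_le_mab
  have balanced_iff : BalancedAB a b H ↔ dab a b (Fintype.card W) H.edgeSet.ncard ≤ mStar H :=
    ⟨fun hB ↦ (le_mStar_iff hW).2 fun _ ↦ dab_le_extDensity_of_balancedAB hb hW hB,
      fun h ↦ balancedAB_iff.2 (dab_le_of_le_mStar hb hW ha h)⟩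
  have strictlyBalanced_iff :
      StrictlyBalancedAB a b H ↔ dab a b (Fintype.card W) H.edgeSet.ncard < mStar H :=
    ⟨fun hS ↦ (lt_mStar_iff hW).2 fun _ ↦ dab_lt_extDensity_of_strictlyBalancedAB hb hW hS,
      fun h ↦ ⟨balanced_iff.2 h.le, fun _ hJ ↦
        hdab_le_mab.trans_lt' (dab_lt_of_lt_mStar hb hW ha h hJ)⟩⟩
  refine ⟨balanced_iff, ⟨fun hB ↦ ?_, fun h ↦ balanced_iff.2 (hdab_le_mab.trans h)⟩,
    strictlyBalanced_iff,
    ⟨fun hS ↦ ?_, fun h ↦ strictlyBalanced_iff.2 (hdab_le_mab.trans_lt h)⟩⟩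
  · rw [hB]
    exact balanced_iff.1 hB
  · rw [hS.1]
    exact strictlyBalanced_iff.1 hS

end AsymRamsey
end

section
/- Let G be a nonempty graph and let H be a nonempty graph with v_H ≥ 3. Then H is balanced with respect to d_2(G,·) if and only if m_2(G) ≤ x*(H); similarly, H is strictly balanced with respect to d_2(G,·) if and only if m_2(G) < x*(H). -/
open scoped Classical

namespace AsymRamsey

instance subgraphFinite {W : Type*} [Fintype W] (H : SimpleGraph W) : Finite H.Subgraph :=
  Finite.of_injective (fun J => (J.verts, J.Adj)) (by
    intro a b h
    simp only [Prod.mk.injEq] at h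
    exact SimpleGraph.Subgraph.ext h.1 h.2)

lemma two_le_verts_ncard {W : Type*} [Fintype W] {H : SimpleGraph W} (J : H.Subgraph)
    (h : J.edgeSet.ncard ≠ 0) : 2 ≤ J.verts.ncard := by
  obtain ⟨e, he⟩ := Set.nonempty_of_ncard_ne_zero h
  induction e using Sym2.ind with
  | _ u v =>
    rw [SimpleGraph.Subgraph.mem_edgeSet] at he
    have h1 : ({u, v} : Set W) ⊆ J.verts := by
      intro w hw
      simp only [Set.mem_insert_iff, Set.mem_singleton_iff] at hw
      rcases hw with rfl | rfl
      · exact J.edge_vert he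
      · exact J.edge_vert he.symm
    calc 2 = ({u, v} : Set W).ncard := (Set.ncard_pair he.ne).symm
    _ ≤ J.verts.ncard := Set.ncard_le_ncard h1 (Set.toFinite _)

lemma verts_ncard_le {W : Type*} [Fintype W] {H : SimpleGraph W} (J : H.Subgraph) :
    J.verts.ncard ≤ Fintype.card W := by
  simpa [Set.ncard_univ] using Set.ncard_le_ncard (Set.subset_univ J.verts) Set.finite_univ

lemma edge_ncard_le {W : Type*} [Fintype W] {H : SimpleGraph W} (J : H.Subgraph) :
    J.edgeSet.ncard ≤ H.edgeSet.ncard :=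
  Set.ncard_le_ncard J.edgeSet_subset (Set.toFinite _)

lemma eq_top_of_cards {W : Type*} [Fintype W] {H : SimpleGraph W} (J : H.Subgraph)
    (hv : J.verts.ncard = Fintype.card W) (he : J.edgeSet.ncard = H.edgeSet.ncard) : J = ⊤ := by
  have hverts : J.verts = Set.univ :=
    Set.eq_of_subset_of_ncard_le (Set.subset_univ _) (by simp [Set.ncard_univ, hv]) Set.finite_univ
  have hedge : J.edgeSet = H.edgeSet :=
    Set.eq_of_subset_of_ncard_le J.edgeSet_subset (by simp [he]) (Set.toFinite _)
  refine SimpleGraph.Subgraph.ext (by simp [hverts]) ?_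
  ext u v
  rw [← SimpleGraph.Subgraph.mem_edgeSet, hedge, SimpleGraph.mem_edgeSet,
    SimpleGraph.Subgraph.top_adj]

lemma half_le_m2 {V : Type*} [Fintype V] (G : SimpleGraph V) (hGne : G.edgeSet.Nonempty) :
    (1:ℝ)/2 ≤ m2 G := by
  obtain ⟨e, he⟩ := hGne
  induction e using Sym2.ind with
  | _ u v =>
  rw [SimpleGraph.mem_edgeSet] at he
  have hfin : {x : ℝ | ∃ J : G.Subgraph, x = d2 J.verts.ncard J.edgeSet.ncard}.Finite :=
    (Set.finite_range fun J : G.Subgraph => d2 J.verts.ncard J.edgeSet.ncard).subset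
      (by rintro x ⟨J, rfl⟩; exact ⟨J, rfl⟩)
  refine le_csSup hfin.bddAbove ⟨G.subgraphOfAdj he, ?_⟩
  have h1 : (G.subgraphOfAdj he).verts.ncard = 2 := by
    rw [show (G.subgraphOfAdj he).verts = {u, v} from rfl]
    exact Set.ncard_pair he.ne
  have h2 : (G.subgraphOfAdj he).edgeSet.ncard = 1 := by simp
  rw [h1, h2]
  norm_num [d2]
set_option maxHeartbeats 1600000 in
/-- Lemma 7: for nonempty graphs `G` and `H` with `v_H ≥ 3`: `H` is
balanced w.r.t. `d₂(G,·)` iff `m₂(G) ≤ x*(H)`, and strictly balanced w.r.t. `d₂(G,·)` iff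
`m₂(G) < x*(H)`. -/
theorem stmt9 {V W : Type*} [Fintype V] [Fintype W]
    (G : SimpleGraph V) (H : SimpleGraph W)
    (hGne : G.edgeSet.Nonempty) (hHne : H.edgeSet.Nonempty) (hW : 3 ≤ Fintype.card W) :
    (BalancedW G H ↔ m2 G ≤ xStar H) ∧
    (StrictlyBalancedW G H ↔ m2 G < xStar H) := by
  classical
  set n := Fintype.card W with hn
  set m := H.edgeSet.ncard with hm
  have hGcard : G.edgeSet.ncard ≠ 0 := ((Set.ncard_pos (Set.toFinite _)).mpr hGne).ne'
  have hμhalf : (1:ℝ)/2 ≤ m2 G := half_le_m2 G hGne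
  obtain ⟨μ, hμdef⟩ : ∃ a : ℝ, a = m2 G := ⟨_, rfl⟩
  rw [← hμdef] at hμhalf
  rw [← hμdef]
  have hμpos : 0 < μ := lt_of_lt_of_le (by norm_num) hμhalf
  obtain ⟨x, hxdef⟩ : ∃ a : ℝ, a = 1 / μ := ⟨_, rfl⟩
  have hx : 0 < x := by rw [hxdef]; positivity
  have hμx : μ * x = 1 := by rw [hxdef]; field_simp
  have hm1 : 1 ≤ m := (Set.ncard_pos (Set.toFinite _)).mpr hHne
  have hmR : (1:ℝ) ≤ (m:ℝ) := by exact_mod_cast hm1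
  have hnR : (3:ℝ) ≤ (n:ℝ) := by exact_mod_cast hW
  obtain ⟨D, hDdef⟩ : ∃ a : ℝ, a = (n:ℝ) - 2 + x := ⟨_, rfl⟩
  have hD : 0 < D := by rw [hDdef]; linarith
  have hd2a : ∀ v e : ℕ, d2a G v e = if e = 0 then 0 else (e:ℝ)/((v:ℝ) - 2 + x) := by
    intro v e
    simp only [d2a, hGcard, false_or]
    rw [← hμdef, ← hxdef]
  obtain ⟨Q, hQdef⟩ : ∃ a : ℝ, a = (m:ℝ) / D := ⟨_, rfl⟩
  have hQpos : 0 < Q := by rw [hQdef]; exact div_pos (by linarith) hD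
  have hQeq : d2a G n m = Q := by
    rw [hd2a, if_neg (by omega : ¬ m = 0), hQdef, hDdef]
  have htopv : (⊤ : H.Subgraph).verts.ncard = n := by
    rw [SimpleGraph.Subgraph.verts_top, Set.ncard_univ, hn]; exact Nat.card_eq_fintype_card
  have htope : (⊤ : H.Subgraph).edgeSet.ncard = m := by
    rw [SimpleGraph.Subgraph.edgeSet_top, hm]
  -- the set defining m2a
  have hfinS : {y : ℝ | ∃ J : H.Subgraph, y = d2a G J.verts.ncard J.edgeSet.ncard}.Finite :=
    (Set.finite_range fun J : H.Subgraph => d2a G J.verts.ncard J.edgeSet.ncard).subset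
      (by rintro y ⟨J, rfl⟩; exact ⟨J, rfl⟩)
  have hQmem : Q ∈ {y : ℝ | ∃ J : H.Subgraph, y = d2a G J.verts.ncard J.edgeSet.ncard} :=
    ⟨⊤, by rw [htopv, htope, hQeq]⟩
  have hBalIff : BalancedW G H ↔
      ∀ J : H.Subgraph, d2a G J.verts.ncard J.edgeSet.ncard ≤ Q := by
    unfold BalancedW m2a
    rw [← hn, ← hm, hQeq]
    constructor
    · intro h J
      exact (le_csSup hfinS.bddAbove ⟨J, rfl⟩).trans_eq h
    · intro h
      refine le_antisymm (csSup_le ⟨Q, hQmem⟩ ?_) (le_csSup hfinS.bddAbove hQmem)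
      rintro y ⟨J, rfl⟩
      exact h J
  -- the set defining mStar
  set SD := {y : ℝ | ∃ J : H.Subgraph, 2 ≤ J.verts.ncard ∧ J.verts.ncard < n ∧
      y = ((m:ℝ) - (J.edgeSet.ncard : ℝ)) / ((n:ℝ) - (J.verts.ncard : ℝ))} with hSDdef
  have hmstar : mStar H = sInf SD := by
    unfold mStar
    rw [hSDdef, ← hn, ← hm]
  have hSDfin : SD.Finite :=
    (Set.finite_range fun J : H.Subgraph =>
        ((m:ℝ) - (J.edgeSet.ncard : ℝ)) / ((n:ℝ) - (J.verts.ncard : ℝ))).subset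
      (by rintro y ⟨J, _, _, rfl⟩; exact ⟨J, rfl⟩)
  obtain ⟨e0, he0⟩ := hHne
  have hSDmem : ((m:ℝ) - 1) / ((n:ℝ) - 2) ∈ SD := by
    induction e0 using Sym2.ind with
    | _ u v =>
    rw [SimpleGraph.mem_edgeSet] at he0
    have h1 : (H.subgraphOfAdj he0).verts.ncard = 2 := by
      rw [show (H.subgraphOfAdj he0).verts = {u, v} from rfl]
      exact Set.ncard_pair he0.ne
    have h2 : (H.subgraphOfAdj he0).edgeSet.ncard = 1 := by simp
    exact ⟨H.subgraphOfAdj he0, by rw [h1], by rw [h1]; omega, by rw [h1, h2]; norm_num⟩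
  have hSDne : SD.Nonempty := ⟨_, hSDmem⟩
  have hSDnonneg : ∀ y ∈ SD, (0:ℝ) ≤ y := by
    rintro y ⟨J, h2v, hlt, rfl⟩
    have heR : (J.edgeSet.ncard:ℝ) ≤ (m:ℝ) := by exact_mod_cast edge_ncard_le J
    have hvR : (J.verts.ncard:ℝ) < (n:ℝ) := by exact_mod_cast hlt
    exact div_nonneg (by linarith) (by linarith)
  have hSDbdd : BddBelow SD := ⟨0, hSDnonneg⟩
  have hmst0 : 0 ≤ sInf SD := le_csInf hSDne hSDnonneg
  have hmstle : sInf SD ≤ ((m:ℝ) - 1) / ((n:ℝ) - 2) := csInf_le hSDbdd hSDmem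
  have hA1 : (1:ℝ) ≤ (m:ℝ) - sInf SD * ((n:ℝ) - 2) := by
    have h2 : (0:ℝ) < (n:ℝ) - 2 := by linarith
    have h3 : sInf SD * ((n:ℝ) - 2) ≤ (m:ℝ) - 1 := by
      rw [← le_div_iff₀ h2]; exact hmstle
    linarith
  have hApos : (0:ℝ) < (m:ℝ) - sInf SD * ((n:ℝ) - 2) := by linarith
  have hxstar : xStar H = sInf SD / ((m:ℝ) - sInf SD * ((n:ℝ) - 2)) := by
    unfold xStar
    rw [← hn, ← hm, hmstar]
  -- cross-multiplication lemmas
  have hcross : ∀ J : H.Subgraph, J.edgeSet.ncard ≠ 0 → J.verts.ncard < n →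
      (d2a G J.verts.ncard J.edgeSet.ncard ≤ Q ↔
        Q ≤ ((m:ℝ) - (J.edgeSet.ncard : ℝ)) / ((n:ℝ) - (J.verts.ncard : ℝ))) := by
    intro J hJe hJv
    have h2vR : (2:ℝ) ≤ (J.verts.ncard:ℝ) := by exact_mod_cast two_le_verts_ncard J hJe
    have hvR : (J.verts.ncard:ℝ) < (n:ℝ) := by exact_mod_cast hJv
    have hd1 : (0:ℝ) < (J.verts.ncard:ℝ) - 2 + x := by linarith
    have hd2 : (0:ℝ) < (n:ℝ) - (J.verts.ncard:ℝ) := by linarith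
    rw [hd2a, if_neg hJe, hQdef, div_le_div_iff₀ hd1 hD, div_le_div_iff₀ hD hd2, hDdef]
    constructor <;> intro h <;> linarith [h]
  have hcrossS : ∀ J : H.Subgraph, J.edgeSet.ncard ≠ 0 → J.verts.ncard < n →
      (d2a G J.verts.ncard J.edgeSet.ncard < Q ↔
        Q < ((m:ℝ) - (J.edgeSet.ncard : ℝ)) / ((n:ℝ) - (J.verts.ncard : ℝ))) := by
    intro J hJe hJv
    have h2vR : (2:ℝ) ≤ (J.verts.ncard:ℝ) := by exact_mod_cast two_le_verts_ncard J hJe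
    have hvR : (J.verts.ncard:ℝ) < (n:ℝ) := by exact_mod_cast hJv
    have hd1 : (0:ℝ) < (J.verts.ncard:ℝ) - 2 + x := by linarith
    have hd2 : (0:ℝ) < (n:ℝ) - (J.verts.ncard:ℝ) := by linarith
    rw [hd2a, if_neg hJe, hQdef, div_lt_div_iff₀ hd1 hD, div_lt_div_iff₀ hD hd2, hDdef]
    constructor <;> intro h <;> linarith [h]
  -- pointwise ↔ mStar-set bounds (non-strict)
  have hB2 : (∀ J : H.Subgraph, d2a G J.verts.ncard J.edgeSet.ncard ≤ Q) ↔
      ∀ y ∈ SD, Q ≤ y := by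
    constructor
    · rintro h y ⟨J, h2v, hlt, rfl⟩
      by_cases hJe : J.edgeSet.ncard = 0
      · rw [hJe]
        have hvR : (J.verts.ncard:ℝ) < (n:ℝ) := by exact_mod_cast hlt
        have h2vR : (2:ℝ) ≤ (J.verts.ncard:ℝ) := by exact_mod_cast h2v
        have hd2' : (0:ℝ) < (n:ℝ) - (J.verts.ncard:ℝ) := by linarith
        rw [hQdef, div_le_div_iff₀ hD hd2', hDdef]
        push_cast
        nlinarith [mul_nonneg (by linarith : (0:ℝ) ≤ (m:ℝ))
          (by linarith : (0:ℝ) ≤ (J.verts.ncard:ℝ) - 2 + x)]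
      · exact (hcross J hJe hlt).mp (h J)
    · intro h J
      by_cases hJe : J.edgeSet.ncard = 0
      · rw [hd2a, if_pos hJe]; exact hQpos.le
      · rcases lt_or_eq_of_le (verts_ncard_le J) with hlt | heq
        · rw [← hn] at hlt
          exact (hcross J hJe hlt).mpr (h _ ⟨J, two_le_verts_ncard J hJe, hlt, rfl⟩)
        · rw [← hn] at heq
          rw [hd2a, if_neg hJe, heq, hQdef, ← hDdef, div_le_div_iff₀ hD hD]
          have heR : (J.edgeSet.ncard:ℝ) ≤ (m:ℝ) := by exact_mod_cast edge_ncard_le J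
          nlinarith [heR, hD]
  -- pointwise ↔ mStar-set bounds (strict)
  have hS2 : (∀ J : H.Subgraph, J ≠ ⊤ → d2a G J.verts.ncard J.edgeSet.ncard < Q) ↔
      ∀ y ∈ SD, Q < y := by
    constructor
    · rintro h y ⟨J, h2v, hlt, rfl⟩
      have hJtop : J ≠ ⊤ := by
        intro hJ; rw [hJ, htopv] at hlt; omega
      by_cases hJe : J.edgeSet.ncard = 0
      · rw [hJe]
        have hvR : (J.verts.ncard:ℝ) < (n:ℝ) := by exact_mod_cast hlt
        have h2vR : (2:ℝ) ≤ (J.verts.ncard:ℝ) := by exact_mod_cast h2v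
        have hd2' : (0:ℝ) < (n:ℝ) - (J.verts.ncard:ℝ) := by linarith
        rw [hQdef, div_lt_div_iff₀ hD hd2', hDdef]
        push_cast
        nlinarith [mul_pos (by linarith : (0:ℝ) < (m:ℝ))
          (by linarith : (0:ℝ) < (J.verts.ncard:ℝ) - 2 + x)]
      · exact (hcrossS J hJe hlt).mp (h J hJtop)
    · intro h J hJtop
      by_cases hJe : J.edgeSet.ncard = 0
      · rw [hd2a, if_pos hJe]; exact hQpos
      · rcases lt_or_eq_of_le (verts_ncard_le J) with hlt | heq
        · rw [← hn] at hlt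
          exact (hcrossS J hJe hlt).mpr (h _ ⟨J, two_le_verts_ncard J hJe, hlt, rfl⟩)
        · rw [← hn] at heq
          have hem : J.edgeSet.ncard ≠ m := by
            intro hEm
            exact hJtop (eq_top_of_cards J (by rw [heq, hn]) (by rw [hEm, hm]))
          have heR : (J.edgeSet.ncard:ℝ) < (m:ℝ) := by
            have := edge_ncard_le (H := H) J
            rw [← hm] at this
            exact_mod_cast lt_of_le_of_ne this hem
          rw [hd2a, if_neg hJe, heq, hQdef, ← hDdef, div_lt_div_iff₀ hD hD]
          nlinarith [heR, hD]
  -- strict balancedness ↔ pointwise strict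
  have hS1 : StrictlyBalancedW G H ↔
      ∀ J : H.Subgraph, J ≠ ⊤ → d2a G J.verts.ncard J.edgeSet.ncard < Q := by
    constructor
    · rintro ⟨hb, hs⟩ J hJ
      have hm2a : m2a G H = Q := by
        unfold BalancedW at hb
        rw [← hn, ← hm, hQeq] at hb
        exact hb
      exact hm2a ▸ hs J hJ
    · intro h
      have hb : BalancedW G H := hBalIff.mpr (fun J => by
        by_cases hJ : J = ⊤
        · subst hJ; rw [htopv, htope, hQeq]
        · exact (h J hJ).le)
      refine ⟨hb, fun J hJ => ?_⟩
      have hm2a : m2a G H = Q := by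
        unfold BalancedW at hb
        rw [← hn, ← hm, hQeq] at hb
        exact hb
      rw [hm2a]
      exact h J hJ
  -- set bounds ↔ sInf bounds
  have hB3 : (∀ y ∈ SD, Q ≤ y) ↔ Q ≤ sInf SD := (le_csInf_iff hSDbdd hSDne).symm
  have hS3 : (∀ y ∈ SD, Q < y) ↔ Q < sInf SD :=
    ⟨fun h => h _ (hSDne.csInf_mem hSDfin),
     fun h y hy => lt_of_lt_of_le h (csInf_le hSDbdd hy)⟩
  -- final algebra
  have hkey : ∀ y : ℝ, y = sInf SD →
      ((Q ≤ y ↔ μ ≤ xStar H) ∧ (Q < y ↔ μ < xStar H)) := by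
    intro y hy
    subst hy
    set t := sInf SD with ht
    have hmux : ∀ s : ℝ, μ * (s * x) = s := fun s => by
      rw [show μ * (s * x) = s * (μ * x) by ring, hμx, mul_one]
    have hxa : ∀ s : ℝ, x * (μ * s) = s := fun s => by
      rw [show x * (μ * s) = s * (μ * x) by ring, hμx, mul_one]
    rw [hxstar, hQdef, div_le_iff₀ hD, div_lt_iff₀ hD, le_div_iff₀ hApos, lt_div_iff₀ hApos]
    constructor
    · constructor
      · intro h
        have h' : (m:ℝ) - t * ((n:ℝ) - 2) ≤ t * x := by rw [hDdef] at h; nlinarith [h]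
        nlinarith [mul_le_mul_of_nonneg_left h' hμpos.le, hmux t]
      · intro h
        have h2 := mul_le_mul_of_nonneg_left h hx.le
        rw [hDdef]
        nlinarith [h2, hxa ((m:ℝ) - t * ((n:ℝ) - 2))]
    · constructor
      · intro h
        have h' : (m:ℝ) - t * ((n:ℝ) - 2) < t * x := by rw [hDdef] at h; nlinarith [h]
        nlinarith [mul_lt_mul_of_pos_left h' hμpos, hmux t]
      · intro h
        have h2 := mul_lt_mul_of_pos_left h hx
        rw [hDdef]
        nlinarith [h2, hxa ((m:ℝ) - t * ((n:ℝ) - 2))]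
  obtain ⟨hk1, hk2⟩ := hkey (sInf SD) rfl
  constructor
  · rw [hBalIff, hB2, hB3, hk1]
  · rw [hS1, hS2, hS3, hk2]
end AsymRamsey
end
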